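/- Let P₁ and P₂ be probability measures on ℝ^{d₁} and ℝ^{d₂} respectively, each satisfying condition C(φ) (in dimensions d₁ and d₂ respectively) for the same function φ : (0,∞) → (0,∞). Then the product measure P₁ ⊗ P₂, viewed as a probability measure on ℝ^{d₁+d₂} with the Euclidean norm, also satisfies condition C(φ). -/

import Mathlib

open MeasureTheory
open scoped RealInnerProductSpace ENNReal

/-- The Gaussian weight `exp(−‖y − x‖²/(2σ²))` defining the Gaussian posterior
`ρ_{P,σ,y}(dx) ∝ exp(−‖y − x‖²/(2σ²)) P(dx)`. -/
noncomputable def gaussWeight {D : ℕ} (σ : ℝ) (y x : EuclideanSpace ℝ (Fin D)) : ℝ :=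
  Real.exp (-‖y - x‖ ^ 2 / (2 * σ ^ 2))

/-- The directional variance `Var_{ρ_{P,σ,y}}(⟨u,·⟩) = ∫⟨u,x⟫² dρ − (∫⟨u,x⟫ dρ)²` of the
Gaussian posterior `ρ_{P,σ,y}`, written via normalized weighted integrals against `P`. -/
noncomputable def dirVar {D : ℕ} (P : Measure (EuclideanSpace ℝ (Fin D))) (σ : ℝ)
    (y u : EuclideanSpace ℝ (Fin D)) : ℝ :=
  (∫ x, gaussWeight σ y x * ⟪u, x⟫ ^ 2 ∂P) / (∫ x, gaussWeight σ y x ∂P) -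
    ((∫ x, gaussWeight σ y x * ⟪u, x⟫ ∂P) / (∫ x, gaussWeight σ y x ∂P)) ^ 2

/-- Condition `C(φ)`: for all `σ > 0`, all `y` and all unit vectors `u`,
`Var_{ρ_{P,σ,y}}(⟨u,·⟩) ≤ φ(σ)`. -/
def SatisfiesC {D : ℕ} (P : Measure (EuclideanSpace ℝ (Fin D))) (φ : ℝ → ℝ) : Prop :=
  ∀ σ > 0, ∀ y u : EuclideanSpace ℝ (Fin D), ‖u‖ = 1 → dirVar P σ y u ≤ φ σ

/-- Concatenation of a vector of `ℝ^{d₁}` and a vector of `ℝ^{d₂}` into a vector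
of `ℝ^{d₁+d₂}`. -/
noncomputable def appendVec {d₁ d₂ : ℕ} (x : EuclideanSpace ℝ (Fin d₁))
    (y : EuclideanSpace ℝ (Fin d₂)) : EuclideanSpace ℝ (Fin (d₁ + d₂)) :=
  (WithLp.equiv 2 (Fin (d₁ + d₂) → ℝ)).symm
    (Fin.append (WithLp.equiv 2 (Fin d₁ → ℝ) x) (WithLp.equiv 2 (Fin d₂ → ℝ) y))

/-
The Gaussian posterior of a product measure at `y = (y₁, y₂)` is the product of the posteriors of
the factors at `y₁` and `y₂`, since the Gaussian weight factorizes. Splitting `u = (u₁, u₂)`, the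
linear form `⟪u, ·⟫` becomes a sum of two independent terms under this posterior, so its variance
is the sum of the two directional variances. By homogeneity each of these is at most
`‖uᵢ‖² φ(σ)`, and `‖u₁‖² + ‖u₂‖² = 1`.
-/

section WeightedVariance

variable {α β : Type*} [MeasurableSpace α] [MeasurableSpace β]

noncomputable def weightedVar (μ : Measure α) (w f : α → ℝ) : ℝ :=
  (∫ x, w x * f x ^ 2 ∂μ) / (∫ x, w x ∂μ) - ((∫ x, w x * f x ∂μ) / (∫ x, w x ∂μ)) ^ 2

lemma weightedVar_prod {μ : Measure α} {ν : Measure β} [SFinite μ] [SFinite ν]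
    {w₁ f₁ : α → ℝ} {w₂ f₂ : β → ℝ}
    (hw₁ : Integrable w₁ μ) (hwf₁ : Integrable (fun x => w₁ x * f₁ x) μ)
    (hwf₁' : Integrable (fun x => w₁ x * f₁ x ^ 2) μ)
    (hw₂ : Integrable w₂ ν) (hwf₂ : Integrable (fun x => w₂ x * f₂ x) ν)
    (hwf₂' : Integrable (fun x => w₂ x * f₂ x ^ 2) ν)
    (hZ₁ : ∫ x, w₁ x ∂μ ≠ 0) (hZ₂ : ∫ x, w₂ x ∂ν ≠ 0) :
    weightedVar (μ.prod ν) (fun p => w₁ p.1 * w₂ p.2) (fun p => f₁ p.1 + f₂ p.2) =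
      weightedVar μ w₁ f₁ + weightedVar ν w₂ f₂ := by
  have hZ := integral_prod_mul (μ := μ) (ν := ν) w₁ w₂
  have hA : ∫ p, w₁ p.1 * w₂ p.2 * (f₁ p.1 + f₂ p.2) ∂μ.prod ν =
      (∫ x, w₁ x * f₁ x ∂μ) * (∫ x, w₂ x ∂ν) + (∫ x, w₁ x ∂μ) * (∫ x, w₂ x * f₂ x ∂ν) := by
    rw [← integral_prod_mul, ← integral_prod_mul,
      ← integral_add (hwf₁.mul_prod hw₂) (hw₁.mul_prod hwf₂)]
    congr 1 with p
    ring
  have hB : ∫ p, w₁ p.1 * w₂ p.2 * (f₁ p.1 + f₂ p.2) ^ 2 ∂μ.prod ν =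
      (∫ x, w₁ x * f₁ x ^ 2 ∂μ) * (∫ x, w₂ x ∂ν) +
        2 * ((∫ x, w₁ x * f₁ x ∂μ) * (∫ x, w₂ x * f₂ x ∂ν)) +
        (∫ x, w₁ x ∂μ) * (∫ x, w₂ x * f₂ x ^ 2 ∂ν) := by
    rw [← integral_prod_mul, ← integral_prod_mul, ← integral_prod_mul, ← integral_const_mul,
      ← integral_add (hwf₁'.mul_prod hw₂) ((hwf₁.mul_prod hwf₂).const_mul 2),
      ← integral_add ?_ (hw₁.mul_prod hwf₂')]
    · congr 1 with p
      ring
    · exact (hwf₁'.mul_prod hw₂).add ((hwf₁.mul_prod hwf₂).const_mul 2)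
  unfold weightedVar
  rw [hZ, hA, hB]
  field_simp
  ring

end WeightedVariance

section Concatenation

variable {d₁ d₂ : ℕ}

noncomputable def splitVec₁ (y : EuclideanSpace ℝ (Fin (d₁ + d₂))) : EuclideanSpace ℝ (Fin d₁) :=
  (WithLp.equiv 2 (Fin d₁ → ℝ)).symm (fun i => y (Fin.castAdd d₂ i))

noncomputable def splitVec₂ (y : EuclideanSpace ℝ (Fin (d₁ + d₂))) : EuclideanSpace ℝ (Fin d₂) :=
  (WithLp.equiv 2 (Fin d₂ → ℝ)).symm (fun i => y (Fin.natAdd d₁ i))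

@[simp]
lemma appendVec_castAdd (a : EuclideanSpace ℝ (Fin d₁)) (b : EuclideanSpace ℝ (Fin d₂))
    (i : Fin d₁) : appendVec a b (Fin.castAdd d₂ i) = a i := by
  simp [appendVec]

@[simp]
lemma appendVec_natAdd (a : EuclideanSpace ℝ (Fin d₁)) (b : EuclideanSpace ℝ (Fin d₂))
    (i : Fin d₂) : appendVec a b (Fin.natAdd d₁ i) = b i := by
  simp [appendVec]

lemma appendVec_split (y : EuclideanSpace ℝ (Fin (d₁ + d₂))) :
    appendVec (splitVec₁ y) (splitVec₂ y) = y := by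
  ext i
  induction i using Fin.addCases <;> simp [splitVec₁, splitVec₂]

lemma appendVec_sub (a c : EuclideanSpace ℝ (Fin d₁)) (b d : EuclideanSpace ℝ (Fin d₂)) :
    appendVec a b - appendVec c d = appendVec (a - c) (b - d) := by
  ext i
  induction i using Fin.addCases <;> simp

lemma inner_appendVec (a c : EuclideanSpace ℝ (Fin d₁)) (b d : EuclideanSpace ℝ (Fin d₂)) :
    ⟪appendVec a b, appendVec c d⟫ = ⟪a, c⟫ + ⟪b, d⟫ := by
  simp [PiLp.inner_apply, Fin.sum_univ_add]

lemma norm_sq_appendVec (a : EuclideanSpace ℝ (Fin d₁)) (b : EuclideanSpace ℝ (Fin d₂)) :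
    ‖appendVec a b‖ ^ 2 = ‖a‖ ^ 2 + ‖b‖ ^ 2 := by
  simp only [← real_inner_self_eq_norm_sq, inner_appendVec]

lemma inner_appendVec_right (u : EuclideanSpace ℝ (Fin (d₁ + d₂)))
    (a : EuclideanSpace ℝ (Fin d₁)) (b : EuclideanSpace ℝ (Fin d₂)) :
    ⟪u, appendVec a b⟫ = ⟪splitVec₁ u, a⟫ + ⟪splitVec₂ u, b⟫ := by
  rw [← inner_appendVec, appendVec_split]

lemma gaussWeight_appendVec (σ : ℝ) (y : EuclideanSpace ℝ (Fin (d₁ + d₂)))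
    (a : EuclideanSpace ℝ (Fin d₁)) (b : EuclideanSpace ℝ (Fin d₂)) :
    gaussWeight σ y (appendVec a b) =
      gaussWeight σ (splitVec₁ y) a * gaussWeight σ (splitVec₂ y) b := by
  have hnorm : ‖y - appendVec a b‖ ^ 2 = ‖splitVec₁ y - a‖ ^ 2 + ‖splitVec₂ y - b‖ ^ 2 := by
    rw [← norm_sq_appendVec, ← appendVec_sub, appendVec_split]
  rw [gaussWeight, gaussWeight, gaussWeight, ← Real.exp_add, hnorm]
  congr 1
  ring

lemma continuous_appendVec :
    Continuous fun p : EuclideanSpace ℝ (Fin d₁) × EuclideanSpace ℝ (Fin d₂) =>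
      appendVec p.1 p.2 := by
  refine (PiLp.continuous_toLp 2 _).comp (continuous_pi fun i => ?_)
  induction i using Fin.addCases <;> simp <;> fun_prop

end Concatenation

lemma mul_exp_neg_div_le {c : ℝ} (hc : 0 < c) (t : ℝ) : t * Real.exp (-t / c) ≤ c := by
  have h : t / c ≤ Real.exp (t / c) := by linarith [Real.add_one_le_exp (t / c)]
  calc t * Real.exp (-t / c) = c * (t / c) * Real.exp (-(t / c)) := by field_simp
    _ ≤ c * Real.exp (t / c) * Real.exp (-(t / c)) := by gcongr
    _ = c := by rw [mul_assoc, ← Real.exp_add, add_neg_cancel, Real.exp_zero, mul_one]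

section GaussianWeight

variable {D : ℕ}

@[fun_prop]
lemma continuous_gaussWeight (σ : ℝ) (y : EuclideanSpace ℝ (Fin D)) :
    Continuous (gaussWeight σ y) := by
  unfold gaussWeight
  fun_prop

lemma gaussWeight_nonneg (σ : ℝ) (y x : EuclideanSpace ℝ (Fin D)) : 0 ≤ gaussWeight σ y x :=
  (Real.exp_pos _).le

lemma gaussWeight_le_one (σ : ℝ) (y x : EuclideanSpace ℝ (Fin D)) : gaussWeight σ y x ≤ 1 :=
  Real.exp_le_one_iff.mpr (div_nonpos_of_nonpos_of_nonneg (by simp) (by positivity))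

lemma gaussWeight_mul_norm_sub_sq_le {σ : ℝ} (hσ : σ ≠ 0) (y x : EuclideanSpace ℝ (Fin D)) :
    gaussWeight σ y x * ‖y - x‖ ^ 2 ≤ 2 * σ ^ 2 := by
  rw [mul_comm]
  exact mul_exp_neg_div_le (by positivity) _

lemma gaussWeight_mul_inner_sq_le {σ : ℝ} (hσ : σ ≠ 0) (y u x : EuclideanSpace ℝ (Fin D)) :
    gaussWeight σ y x * ⟪u, x⟫ ^ 2 ≤ 2 * ‖u‖ ^ 2 * (‖y‖ ^ 2 + 2 * σ ^ 2) := by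
  have hx : ‖x‖ ^ 2 ≤ 2 * (‖y‖ ^ 2 + ‖y - x‖ ^ 2) := by
    have := norm_sub_le y (y - x)
    rw [sub_sub_cancel] at this
    nlinarith [norm_nonneg x, sq_nonneg (‖y‖ - ‖y - x‖)]
  have hux : ⟪u, x⟫ ^ 2 ≤ ‖u‖ ^ 2 * ‖x‖ ^ 2 := by
    rw [← mul_pow, ← sq_abs]
    exact pow_le_pow_left₀ (abs_nonneg _) (abs_real_inner_le_norm u x) 2
  have hw := gaussWeight_nonneg σ y x
  calc gaussWeight σ y x * ⟪u, x⟫ ^ 2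
      ≤ gaussWeight σ y x * (‖u‖ ^ 2 * (2 * (‖y‖ ^ 2 + ‖y - x‖ ^ 2))) := by
        gcongr
        exact hux.trans (by gcongr)
    _ = 2 * ‖u‖ ^ 2 * (gaussWeight σ y x * ‖y‖ ^ 2 + gaussWeight σ y x * ‖y - x‖ ^ 2) := by ring
    _ ≤ 2 * ‖u‖ ^ 2 * (‖y‖ ^ 2 + 2 * σ ^ 2) := by
        refine mul_le_mul_of_nonneg_left (add_le_add ?_ (gaussWeight_mul_norm_sub_sq_le hσ y x))
          (by positivity)
        exact mul_le_of_le_one_left (sq_nonneg _) (gaussWeight_le_one σ y x)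

variable (P : Measure (EuclideanSpace ℝ (Fin D))) [IsFiniteMeasure P]

lemma integrable_gaussWeight (σ : ℝ) (y : EuclideanSpace ℝ (Fin D)) :
    Integrable (gaussWeight σ y) P :=
  .of_bound (continuous_gaussWeight σ y).aestronglyMeasurable 1 <| .of_forall fun x => by
    rw [Real.norm_of_nonneg (gaussWeight_nonneg σ y x)]
    exact gaussWeight_le_one σ y x

lemma integrable_gaussWeight_mul_inner_sq {σ : ℝ} (hσ : σ ≠ 0) (y u : EuclideanSpace ℝ (Fin D)) :
    Integrable (fun x => gaussWeight σ y x * ⟪u, x⟫ ^ 2) P :=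
  .of_bound (by fun_prop) _ <| .of_forall fun x => by
    rw [Real.norm_of_nonneg (by have := gaussWeight_nonneg σ y x; positivity)]
    exact gaussWeight_mul_inner_sq_le hσ y u x

lemma integrable_gaussWeight_mul_inner {σ : ℝ} (hσ : σ ≠ 0) (y u : EuclideanSpace ℝ (Fin D)) :
    Integrable (fun x => gaussWeight σ y x * ⟪u, x⟫) P := by
  refine ((integrable_gaussWeight P σ y).add (integrable_gaussWeight_mul_inner_sq P hσ y u)).mono'
    (by fun_prop) (.of_forall fun x => ?_)
  -- `|t| ≤ 1 + t²`, so `|w t| ≤ w + w t²`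
  have hw := gaussWeight_nonneg σ y x
  rw [norm_mul, Real.norm_of_nonneg hw, Real.norm_eq_abs, Pi.add_apply, ← mul_one_add]
  gcongr
  nlinarith [sq_abs ⟪u, x⟫, abs_nonneg ⟪u, x⟫]

lemma integral_gaussWeight_pos [NeZero P] (σ : ℝ) (y : EuclideanSpace ℝ (Fin D)) :
    0 < ∫ x, gaussWeight σ y x ∂P :=
  integral_exp_pos (integrable_gaussWeight P σ y)

end GaussianWeight

section Homogeneity

variable {D : ℕ}

lemma dirVar_smul (P : Measure (EuclideanSpace ℝ (Fin D))) (σ : ℝ)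
    (y u : EuclideanSpace ℝ (Fin D)) (c : ℝ) :
    dirVar P σ y (c • u) = c ^ 2 * dirVar P σ y u := by
  simp only [dirVar, real_inner_smul_left, mul_pow, mul_left_comm _ (c ^ 2), mul_left_comm _ c,
    integral_const_mul]
  ring

lemma SatisfiesC.dirVar_le {P : Measure (EuclideanSpace ℝ (Fin D))} {φ : ℝ → ℝ}
    (h : SatisfiesC P φ) {σ : ℝ} (hσ : 0 < σ) (y u : EuclideanSpace ℝ (Fin D)) :
    dirVar P σ y u ≤ ‖u‖ ^ 2 * φ σ := by
  rcases eq_or_ne u 0 with rfl | hu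
  · simp [dirVar]
  have hn : ‖u‖ ≠ 0 := norm_ne_zero_iff.mpr hu
  calc dirVar P σ y u = dirVar P σ y (‖u‖ • ‖u‖⁻¹ • u) := by
        rw [smul_inv_smul₀ hn]
    _ = ‖u‖ ^ 2 * dirVar P σ y (‖u‖⁻¹ • u) := dirVar_smul ..
    _ ≤ ‖u‖ ^ 2 * φ σ := by
        gcongr
        exact h σ hσ y _ (norm_smul_inv_norm hu)

end Homogeneity

lemma dirVar_map_appendVec_prod {d₁ d₂ : ℕ}
    (P₁ : Measure (EuclideanSpace ℝ (Fin d₁))) [IsFiniteMeasure P₁] [NeZero P₁]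
    (P₂ : Measure (EuclideanSpace ℝ (Fin d₂))) [IsFiniteMeasure P₂] [NeZero P₂]
    {σ : ℝ} (hσ : σ ≠ 0) (y u : EuclideanSpace ℝ (Fin (d₁ + d₂))) :
    dirVar ((P₁.prod P₂).map (fun p => appendVec p.1 p.2)) σ y u =
      dirVar P₁ σ (splitVec₁ y) (splitVec₁ u) + dirVar P₂ σ (splitVec₂ y) (splitVec₂ u) := by
  have hmap (g : EuclideanSpace ℝ (Fin (d₁ + d₂)) → ℝ) (hg : Continuous g) :
      ∫ x, g x ∂(P₁.prod P₂).map (fun p => appendVec p.1 p.2) =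
        ∫ p, g (appendVec p.1 p.2) ∂P₁.prod P₂ :=
    integral_map continuous_appendVec.aemeasurable hg.aestronglyMeasurable
  unfold dirVar
  rw [hmap _ (by fun_prop), hmap _ (by fun_prop), hmap _ (by fun_prop)]
  simp only [gaussWeight_appendVec, inner_appendVec_right]
  -- both sides are now `weightedVar` unfolded
  exact weightedVar_prod (integrable_gaussWeight P₁ σ _)
    (integrable_gaussWeight_mul_inner P₁ hσ _ _) (integrable_gaussWeight_mul_inner_sq P₁ hσ _ _)
    (integrable_gaussWeight P₂ σ _) (integrable_gaussWeight_mul_inner P₂ hσ _ _)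
    (integrable_gaussWeight_mul_inner_sq P₂ hσ _ _)
    (integral_gaussWeight_pos P₁ σ _).ne' (integral_gaussWeight_pos P₂ σ _).ne'

/-- If `P₁` on `ℝ^{d₁}` and `P₂` on `ℝ^{d₂}` both satisfy condition `C(φ)`, then the product
measure `P₁ ⊗ P₂`, viewed as a measure on the Euclidean space `ℝ^{d₁+d₂}` via concatenation,
also satisfies `C(φ)`. -/
theorem satisfiesC_prod {d₁ d₂ : ℕ}
    (P₁ : Measure (EuclideanSpace ℝ (Fin d₁))) [IsProbabilityMeasure P₁]
    (P₂ : Measure (EuclideanSpace ℝ (Fin d₂))) [IsProbabilityMeasure P₂]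
    (φ : ℝ → ℝ) (h₁ : SatisfiesC P₁ φ) (h₂ : SatisfiesC P₂ φ) :
    SatisfiesC ((P₁.prod P₂).map (fun p => appendVec p.1 p.2)) φ := by
  intro σ hσ y u hu
  rw [dirVar_map_appendVec_prod P₁ P₂ hσ.ne']
  calc _ ≤ ‖splitVec₁ u‖ ^ 2 * φ σ + ‖splitVec₂ u‖ ^ 2 * φ σ :=
        add_le_add (h₁.dirVar_le hσ _ _) (h₂.dirVar_le hσ _ _)
    _ = φ σ := by rw [← add_mul, ← norm_sq_appendVec, appendVec_split, hu, one_pow, one_mul]
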